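/- arXiv:1706.02355 — 3 statements merged into one kernel-verified Lean document; each statement's English description precedes it below -/
import Mathlib

section
/- Let φ : S¹ → S¹ × S¹ be a continuous closed curve into the torus with degree pair (a, b), meaning the two coordinate projections of φ have topological degrees a and b respectively. If a ≠ b, then the image of φ intersects the diagonal D = {(u, u) : u ∈ S¹}. -/
/-!
If `F` and `G` lift the two coordinates of the curve, then `F - G` is continuous and gains
`(a - b) · 2π` over one period, a change of absolute value at least `2π`. By the intermediate
value theorem `F - G` therefore hits a multiple of `2π`, and at that parameter the two
coordinates agree on the circle.
-/

open Real

/-- `CircleDeg f n` : the continuous map `f : S¹ → S¹` has topological degree `n`,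
expressed via a continuous lift `F : ℝ → ℝ` along the exponential covering map. -/
def CircleDeg (f : Circle → Circle) (n : ℤ) : Prop :=
  ∃ F : ℝ → ℝ, Continuous F ∧ (∀ t : ℝ, f (Circle.exp t) = Circle.exp (F t)) ∧
    ∀ t : ℝ, F (t + 2 * π) = F t + n * (2 * π)

theorem exists_eq_int_mul_of_le_abs_sub {H : ℝ → ℝ} (hH : Continuous H) {p x y : ℝ}
    (hp : 0 < p) (hxy : p ≤ |H y - H x|) : ∃ t : ℝ, ∃ k : ℤ, H t = k * p := by
  wlog hle : H x ≤ H y generalizing x y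
  · exact this (by rwa [abs_sub_comm]) (le_of_not_ge hle)
  rw [abs_of_nonneg (sub_nonneg.2 hle)] at hxy
  set k := ⌈H x / p⌉
  have hk_ge : H x ≤ k * p := (div_le_iff₀ hp).1 (Int.le_ceil _)
  have hk_lt : (k : ℝ) * p < H x + p := by
    have := mul_lt_mul_of_pos_right (Int.ceil_lt_add_one (H x / p)) hp
    rwa [add_mul, div_mul_cancel₀ _ hp.ne', one_mul] at this
  have hmem : (k : ℝ) * p ∈ Set.uIcc (H x) (H y) :=
    Set.Icc_subset_uIcc ⟨hk_ge, by linarith⟩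
  obtain ⟨t, -, ht⟩ := intermediate_value_uIcc hH.continuousOn hmem
  exact ⟨t, k, ht⟩

theorem CircleDeg.exists_apply_eq_of_ne {f g : Circle → Circle} {a b : ℤ}
    (hf : CircleDeg f a) (hg : CircleDeg g b) (hab : a ≠ b) : ∃ z, f z = g z := by
  obtain ⟨F, hFc, hF, hFper⟩ := hf
  obtain ⟨G, hGc, hG, hGper⟩ := hg
  have hgain : 2 * π ≤ |(F (0 + 2 * π) - G (0 + 2 * π)) - (F 0 - G 0)| := by
    have hone : (1 : ℝ) ≤ |((a - b : ℤ) : ℝ)| := by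
      exact_mod_cast Int.one_le_abs (sub_ne_zero.2 hab)
    rw [hFper, hGper, show F 0 + a * (2 * π) - (G 0 + b * (2 * π)) - (F 0 - G 0)
        = ((a - b : ℤ) : ℝ) * (2 * π) by push_cast; ring, abs_mul, abs_of_pos two_pi_pos]
    exact le_mul_of_one_le_left two_pi_pos.le hone
  obtain ⟨t, k, ht⟩ := exists_eq_int_mul_of_le_abs_sub (hFc.sub hGc) two_pi_pos hgain
  refine ⟨Circle.exp t, ?_⟩
  rw [hF, hG, Circle.exp_eq_exp]
  exact ⟨k, by linarith [show F t - G t = k * (2 * π) from ht]⟩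

theorem curve_with_unequal_degrees_meets_diagonal_general
    (φ : Circle → Circle × Circle) (a b : ℤ)
    (ha : CircleDeg (fun z => (φ z).1) a) (hb : CircleDeg (fun z => (φ z).2) b)
    (hab : a ≠ b) :
    ∃ z : Circle, (φ z).1 = (φ z).2 :=
  ha.exists_apply_eq_of_ne hb hab

/-- If a continuous closed curve `φ : S¹ → S¹ × S¹` into the torus has degree pair
`(a, b)` with `a ≠ b`, then its image intersects the diagonal. -/
theorem curve_with_unequal_degrees_meets_diagonal
    (φ : Circle → Circle × Circle) (hφ : Continuous φ) (a b : ℤ)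
    (ha : CircleDeg (fun z => (φ z).1) a) (hb : CircleDeg (fun z => (φ z).2) b)
    (hab : a ≠ b) :
    ∃ z : Circle, (φ z).1 = (φ z).2 :=
  curve_with_unequal_degrees_meets_diagonal_general φ a b ha hb hab
end

section
/- Any continuous closed curve ψ : S¹ → S¹ × S¹ whose image avoids the diagonal D = {(u,u) : u ∈ S¹} has degree pair of the form (a, a) for some integer a. -/
/-!
The quotient `w = ψ₁ / ψ₂` misses `1`, so it has a continuous argument and degree `0`.
Lifts, and hence degrees, add under pointwise multiplication, so
`deg ψ₁ = deg w + deg ψ₂ = deg ψ₂`. Degrees exist because continuous maps `ℝ → S¹` lift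
along the covering map `Circle.exp`, uniquely up to a constant in `2πℤ`.
-/

open Real

namespace Circle

theorem continuousAt_arg {z : Circle} (hz : z ≠ -1) :
    ContinuousAt (fun w : Circle => Complex.arg w) z := by
  refine (Complex.continuousAt_arg ?_).comp continuous_subtype_val.continuousAt
  rw [Complex.mem_slitPlane_iff_arg]
  refine ⟨?_, z.coe_ne_zero⟩
  have h1 : ((-1 : Circle) : ℂ) = -1 := by simp
  rw [← Complex.arg_neg_one, ← h1]
  exact fun h => hz (arg_eq_arg.1 h)

variable {A : Type*} [TopologicalSpace A] [SimplyConnectedSpace A] [LocallyPathConnectedSpace A]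

theorem exists_lift (f : C(A, Circle)) : ∃ F : C(A, ℝ), exp ∘ F = f := by
  obtain ⟨a₀⟩ : Nonempty A := inferInstance
  obtain ⟨F, -, hF⟩ := (isCoveringMap_exp.existsUnique_continuousMap_lifts f a₀ _
    (exp_arg (f a₀))).exists
  exact ⟨F, hF⟩

theorem exists_eq_add_int_mul_two_pi_of_exp_comp_eq {F G : C(A, ℝ)}
    (h : exp ∘ F = exp ∘ G) : ∃ n : ℤ, ∀ a, F a = G a + n * (2 * π) := by
  obtain ⟨a₀⟩ : Nonempty A := inferInstance
  obtain ⟨n, hn⟩ := exp_eq_exp.1 (congrFun h a₀)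
  let G' : C(A, ℝ) := G + .const A (n * (2 * π))
  have hG' : exp ∘ G' = exp ∘ G := by
    funext a
    exact exp_eq_exp.2 ⟨n, rfl⟩
  have := (isCoveringMap_exp.existsUnique_continuousMap_lifts (.comp exp G) a₀ (F a₀)
    (congrFun h a₀)).unique ⟨rfl, h⟩ ⟨hn.symm, hG'⟩
  exact ⟨n, fun a => congrFun (congrArg DFunLike.coe this) a⟩

end Circle

theorem exists_circleDeg {g : Circle → Circle} (hg : Continuous g) : ∃ n : ℤ, CircleDeg g n := by
  obtain ⟨F, hF⟩ := Circle.exists_lift ⟨g ∘ Circle.exp, hg.comp Circle.exp.continuous⟩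
  let F' : C(ℝ, ℝ) := F.comp ⟨(· + 2 * π), continuous_add_const _⟩
  have hF' : Circle.exp ∘ F' = Circle.exp ∘ F := by
    funext t
    calc Circle.exp (F (t + 2 * π)) = g (Circle.exp (t + 2 * π)) := congrFun hF _
      _ = g (Circle.exp t) := by rw [Circle.periodic_exp t]
      _ = Circle.exp (F t) := (congrFun hF t).symm
  obtain ⟨n, hn⟩ := Circle.exists_eq_add_int_mul_two_pi_of_exp_comp_eq hF'
  exact ⟨n, F, F.continuous, fun t => (congrFun hF t).symm, hn⟩

theorem CircleDeg.mul {f g : Circle → Circle} {m n : ℤ} (hf : CircleDeg f m)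
    (hg : CircleDeg g n) : CircleDeg (fun z => f z * g z) (m + n) := by
  obtain ⟨F, hFc, hF, hFper⟩ := hf
  obtain ⟨G, hGc, hG, hGper⟩ := hg
  refine ⟨F + G, hFc.add hGc, fun t => by simp [hF, hG, Circle.exp_add], fun t => ?_⟩
  simp only [Pi.add_apply, hFper, hGper]
  push_cast
  ring

theorem circleDeg_zero_of_not_surjective {f : Circle → Circle} (hf : Continuous f)
    (hns : ¬ Function.Surjective f) : CircleDeg f 0 := by
  obtain ⟨c, hc⟩ : ∃ c, ∀ z, f z ≠ c := by simpa [Function.Surjective] using hns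
  -- `-(c⁻¹ * f z)` never hits `-1`, where `arg` jumps, and `-(c⁻¹ * f z) * -c = f z`.
  let F : ℝ → ℝ := fun t =>
    Complex.arg (-(c⁻¹ * f (Circle.exp t)) : Circle) + Complex.arg (-c : Circle)
  refine ⟨F, ?_, fun t => ?_, fun t => ?_⟩
  · refine .add (continuous_iff_continuousAt.2 fun t => ?_) continuous_const
    refine (Circle.continuousAt_arg ?_).comp (by fun_prop)
    rw [Ne, neg_inj, inv_mul_eq_one]
    exact (hc _).symm
  · simp only [F, Circle.exp_add, Circle.exp_arg, neg_mul_neg]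
    rw [mul_comm c⁻¹, inv_mul_cancel_right]
  · simp [F, Circle.periodic_exp t]

/-- A continuous closed curve `ψ : S¹ → S¹ × S¹` whose image avoids the diagonal
has degree pair of the form `(a, a)` for some integer `a`. -/
theorem curve_avoiding_diagonal_has_equal_degrees
    (ψ : Circle → Circle × Circle) (hψ : Continuous ψ)
    (hdiag : ∀ z : Circle, (ψ z).1 ≠ (ψ z).2) :
    ∃ a : ℤ, CircleDeg (fun z => (ψ z).1) a ∧ CircleDeg (fun z => (ψ z).2) a := by
  obtain ⟨n, hn⟩ := exists_circleDeg hψ.snd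
  have hquot : CircleDeg (fun z => (ψ z).1 / (ψ z).2) 0 :=
    circleDeg_zero_of_not_surjective (hψ.fst.div' hψ.snd) fun hsurj =>
      let ⟨z, hz⟩ := hsurj 1
      hdiag z (div_eq_one.1 hz)
  refine ⟨n, ?_, hn⟩
  simpa only [div_mul_cancel, zero_add] using hquot.mul hn
end

section
/- Let Γ ⊆ X × X be the intersection of a nested family of compact relations Γ_ε (ε > 0, with Γ_ε ⊆ Γ_δ for ε ≤ δ), where X is a compact metric space. If for every ε > 0 the composition Γ₃,ε ∘ Γ₂,ε ∘ Γ₁,ε of three such nested families has a fixed point, then Γ₃ ∘ Γ₂ ∘ Γ₁ has a fixed point, where Γᵢ = ⋂_ε Γᵢ,ε. -/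
/-- Composition of relations: `R₂ ∘ R₁ = {(x,z) : ∃ y, (x,y) ∈ R₁ ∧ (y,z) ∈ R₂}`. -/
def relComp {X Y Z : Type*} (R₁ : Set (X × Y)) (R₂ : Set (Y × Z)) : Set (X × Z) :=
  {p : X × Z | ∃ y : Y, (p.1, y) ∈ R₁ ∧ (y, p.2) ∈ R₂}

/-!
A fixed point `x` of `Γ₃ ∘ Γ₂ ∘ Γ₁` is the same as a cycle `x → y → z → x` with consecutive
steps in `Γ₁`, `Γ₂`, `Γ₃`. The cycles of `(Γ₁ ε, Γ₂ ε, Γ₃ ε)` form a nested family of nonempty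
closed subsets of the compact space `X × X × X`, so by Cantor's intersection theorem they have a
common point, which is a cycle of the intersections `(Γ₁, Γ₂, Γ₃)`.
-/

open Set

section Cycles

variable {X : Type*}

def relCycles (R₁ R₂ R₃ : Set (X × X)) : Set (X × X × X) :=
  {t | (t.1, t.2.1) ∈ R₁ ∧ (t.2.1, t.2.2) ∈ R₂ ∧ (t.2.2, t.1) ∈ R₃}

theorem exists_fixedPoint_relComp_iff_relCycles_nonempty (R₁ R₂ R₃ : Set (X × X)) :
    (∃ p : X, (p, p) ∈ relComp (relComp R₁ R₂) R₃) ↔ (relCycles R₁ R₂ R₃).Nonempty := by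
  constructor
  · rintro ⟨p, z, ⟨y, hpy, hyz⟩, hzp⟩
    exact ⟨(p, y, z), hpy, hyz, hzp⟩
  · rintro ⟨⟨p, y, z⟩, hpy, hyz, hzp⟩
    exact ⟨p, z, ⟨y, hpy, hyz⟩, hzp⟩

theorem relCycles_mono {R₁ R₂ R₃ S₁ S₂ S₃ : Set (X × X)} (h₁ : R₁ ⊆ S₁) (h₂ : R₂ ⊆ S₂)
    (h₃ : R₃ ⊆ S₃) : relCycles R₁ R₂ R₃ ⊆ relCycles S₁ S₂ S₃ :=
  fun _ ⟨ht₁, ht₂, ht₃⟩ ↦ ⟨h₁ ht₁, h₂ ht₂, h₃ ht₃⟩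

theorem relCycles_biInter {ι : Type*} (s : Set ι) (R₁ R₂ R₃ : ι → Set (X × X)) :
    relCycles (⋂ i ∈ s, R₁ i) (⋂ i ∈ s, R₂ i) (⋂ i ∈ s, R₃ i) =
      ⋂ i ∈ s, relCycles (R₁ i) (R₂ i) (R₃ i) := by
  ext t
  simp only [relCycles, mem_iInter, mem_ofPred_eq]
  grind

theorem IsClosed.relCycles [TopologicalSpace X] {R₁ R₂ R₃ : Set (X × X)} (h₁ : IsClosed R₁)
    (h₂ : IsClosed R₂) (h₃ : IsClosed R₃) : IsClosed (relCycles R₁ R₂ R₃) :=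
  (h₁.preimage (f := fun t : X × X × X ↦ (t.1, t.2.1)) (by fun_prop)).inter <|
    (h₂.preimage (f := fun t : X × X × X ↦ t.2) (by fun_prop)).inter
      (h₃.preimage (f := fun t : X × X × X ↦ (t.2.2, t.1)) (by fun_prop))

end Cycles

theorem nonempty_biInter_Ioi_of_nested_isClosed {α Y : Type*} [LinearOrder α] [NoMaxOrder α]
    [TopologicalSpace Y] [CompactSpace Y] (a : α) (F : α → Set Y)
    (hclosed : ∀ ε, a < ε → IsClosed (F ε)) (hmono : ∀ ε δ, a < ε → ε ≤ δ → F ε ⊆ F δ)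
    (hne : ∀ ε, a < ε → (F ε).Nonempty) : (⋂ ε ∈ Ioi a, F ε).Nonempty := by
  have : Nonempty (Ioi a) := nonempty_Ioi_subtype
  have hdir : Directed (· ⊇ ·) fun ε : Ioi a ↦ F ε :=
    Monotone.directed_ge fun ε δ h ↦ hmono ε δ ε.2 h
  rw [biInter_eq_iInter]
  exact IsCompact.nonempty_iInter_of_directed_nonempty_isCompact_isClosed _ hdir
    (fun ε ↦ hne ε ε.2) (fun ε ↦ (hclosed ε ε.2).isCompact) (fun ε ↦ hclosed ε ε.2)

/-- Let `X` be a compact metric space and, for `i = 1, 2, 3`, let `(Γᵢ ε)_{ε > 0}` be a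
nested family of compact relations on `X` with intersection `Γᵢ = ⋂_{ε>0} Γᵢ ε`.  If for
every `ε > 0` the composition `Γ₃ ε ∘ Γ₂ ε ∘ Γ₁ ε` has a fixed point, then
`Γ₃ ∘ Γ₂ ∘ Γ₁` has a fixed point. -/
theorem fixed_point_of_nested_relations (X : Type*) [MetricSpace X] [CompactSpace X]
    (Γ₁ Γ₂ Γ₃ : ℝ → Set (X × X))
    (hcpt : ∀ ε : ℝ, 0 < ε → IsCompact (Γ₁ ε) ∧ IsCompact (Γ₂ ε) ∧ IsCompact (Γ₃ ε))
    (hnest : ∀ ε δ : ℝ, 0 < ε → ε ≤ δ → Γ₁ ε ⊆ Γ₁ δ ∧ Γ₂ ε ⊆ Γ₂ δ ∧ Γ₃ ε ⊆ Γ₃ δ)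
    (hfix : ∀ ε : ℝ, 0 < ε →
      ∃ p : X, (p, p) ∈ relComp (relComp (Γ₁ ε) (Γ₂ ε)) (Γ₃ ε)) :
    ∃ p : X, (p, p) ∈ relComp (relComp (⋂ ε ∈ Set.Ioi (0 : ℝ), Γ₁ ε)
      (⋂ ε ∈ Set.Ioi (0 : ℝ), Γ₂ ε)) (⋂ ε ∈ Set.Ioi (0 : ℝ), Γ₃ ε) := by
  rw [exists_fixedPoint_relComp_iff_relCycles_nonempty, relCycles_biInter]
  refine nonempty_biInter_Ioi_of_nested_isClosed 0 _ (fun ε hε ↦ ?_) (fun ε δ hε hεδ ↦ ?_)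
    (fun ε hε ↦ (exists_fixedPoint_relComp_iff_relCycles_nonempty _ _ _).mp (hfix ε hε))
  · obtain ⟨h₁, h₂, h₃⟩ := hcpt ε hε
    exact h₁.isClosed.relCycles h₂.isClosed h₃.isClosed
  · obtain ⟨h₁, h₂, h₃⟩ := hnest ε δ hε hεδ
    exact relCycles_mono h₁ h₂ h₃
end
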